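/- arXiv:2412.10952 — 2 statements merged into one kernel-verified Lean document; each statement's English description precedes it below -/
import Mathlib

section
/- Let C be a coalgebra with filtration {C_n}, A a unital algebra, g : C → A convolution-invertible and f : C → A vanishing on C_n. Then g + f is convolution-invertible and (g+f)^{-1} agrees with g^{-1} − g^{-1} * f * g^{-1} on C_{n+1}. -/
open TensorProduct

/-- The convolution product on `Hom_k(C, A)`. -/
noncomputable def conv {k : Type*} [Field k] {C A : Type*}
    [AddCommGroup C] [Module k C] [Coalgebra k C]
    [Ring A] [Algebra k A]
    (f g : C →ₗ[k] A) : C →ₗ[k] A :=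
  LinearMap.mul' k A ∘ₗ TensorProduct.map f g ∘ₗ Coalgebra.comul

/-- The convolution unit `e : c ↦ ε(c)·1_A`. -/
noncomputable def convUnit (k : Type*) [Field k] (C A : Type*)
    [AddCommGroup C] [Module k C] [Coalgebra k C]
    [Ring A] [Algebra k A] : C →ₗ[k] A :=
  Algebra.linearMap k A ∘ₗ (Coalgebra.counit : C →ₗ[k] k)

/-!
Convolution makes `WithConv (C →ₗ[k] A)` a ring. The maps vanishing on `C_N` form two-sided
ideals `J_N` with `J_a * J_b ⊆ J_(a+b+1)`, and exhaustiveness of the filtration makes this ring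
separated and complete for them. So `q = f * g⁻¹ ∈ J_0` satisfies `q ^ (N+1) ∈ J_N`, the geometric
series `∑ (-q)^m` converges to an inverse of `1 + q`, and `g + f = (1 + q) * g` is invertible.
For its inverse `h`, `h - (g⁻¹ - g⁻¹ * f * g⁻¹) = h * (f * g⁻¹ * f) * g⁻¹ ∈ J_(2n+1) ⊆ J_(n+1)`.
-/

open WithConv

open Finset in
theorem isUnit_one_sub_of_forall_pow_succ_mem {R : Type*} [Ring R] (I : ℕ → TwoSidedIdeal R)
    (hsep : ∀ y, (∀ N, y ∈ I N) → y = 0)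
    (hcomplete : ∀ s : ℕ → R, (∀ N M, N ≤ M → s M - s N ∈ I N) → ∃ y, ∀ N, y - s N ∈ I N)
    {x : R} (hx : ∀ N, x ^ (N + 1) ∈ I N) : IsUnit (1 - x) := by
  set s : ℕ → R := fun N ↦ ∑ i ∈ range (N + 1), x ^ i
  have hs : ∀ N M, N ≤ M → s M - s N ∈ I N := by
    intro N M hNM
    induction M, hNM using Nat.le_induction with
    | base => simp
    | succ M hNM ih =>
      have hpow : x ^ (M + 1) ∈ I N := by
        rw [← Nat.sub_add_cancel hNM, add_assoc, add_comm, pow_add]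
        exact (I N).mul_mem_right _ _ (hx N)
      have : s (M + 1) - s N = (s M - s N) + x ^ (M + 1) := by
        simp only [s, sum_range_succ _ (M + 1)]; abel
      rw [this]
      exact (I N).add_mem ih hpow
  obtain ⟨y, hy⟩ := hcomplete s hs
  have hleft : (1 - x) * y = 1 := by
    rw [← sub_eq_zero]
    refine hsep _ fun N ↦ ?_
    have : (1 - x) * y - 1 = (1 - x) * (y - s N) - x ^ (N + 1) := by
      rw [mul_sub, mul_neg_geom_sum]; abel
    rw [this]
    exact (I N).sub_mem ((I N).mul_mem_left _ _ (hy N)) (hx N)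
  have hright : y * (1 - x) = 1 := by
    rw [← sub_eq_zero]
    refine hsep _ fun N ↦ ?_
    have : y * (1 - x) - 1 = (y - s N) * (1 - x) - x ^ (N + 1) := by
      rw [sub_mul, geom_sum_mul_neg]; abel
    rw [this]
    exact (I N).sub_mem ((I N).mul_mem_right _ _ (hy N)) (hx N)
  exact ⟨⟨1 - x, y, hleft, hright⟩, rfl⟩

section Filtration

variable {R C : Type*} [CommSemiring R] [AddCommMonoid C] [Module R C]

theorem exists_mem_of_iSup_eq_top {F : ℕ → Submodule R C} (hmono : Monotone F)
    (hexh : ⨆ n, F n = ⊤) (c : C) : ∃ N, c ∈ F N :=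
  (Submodule.mem_iSup_of_directed F hmono.directed_le).mp (hexh ▸ Submodule.mem_top)

theorem exists_linearMap_eqOn_of_iSup_eq_top {M : Type*} [AddCommMonoid M] [Module R M]
    {F : ℕ → Submodule R C} (hmono : Monotone F) (hexh : ⨆ n, F n = ⊤)
    (s : ℕ → C →ₗ[R] M) (hs : ∀ N N', N ≤ N' → Set.EqOn (s N') (s N) (F N)) :
    ∃ t : C →ₗ[R] M, ∀ N, Set.EqOn t (s N) (F N) := by
  choose idx hidx using exists_mem_of_iSup_eq_top hmono hexh
  have key {c : C} {N : ℕ} (hc : c ∈ F N) : s (idx c) c = s N c := by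
    rw [← hs (idx c) (max (idx c) N) (le_max_left _ _) (hidx c),
      hs N (max (idx c) N) (le_max_right _ _) hc]
  refine ⟨{ toFun := fun c ↦ s (idx c) c, map_add' := fun x y ↦ ?_, map_smul' := fun r x ↦ ?_ },
    fun N c hc ↦ key hc⟩
  · have hx := hmono (le_max_left (idx x) (idx y)) (hidx x)
    have hy := hmono (le_max_right (idx x) (idx y)) (hidx y)
    simp only [key hx, key hy, key (add_mem hx hy), map_add]
  · simp only [key (Submodule.smul_mem _ r (hidx x)), map_smul, RingHom.id_apply]

variable [Coalgebra R C]

structure IsCoalgebraFiltration (F : ℕ → Submodule R C) : Prop where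
  monotone : Monotone F
  comul_mem : ∀ m, ∀ c ∈ F m, Coalgebra.comul (R := R) c ∈
    ∑ i ∈ Finset.range (m + 1), LinearMap.range (map (F i).subtype (F (m - i)).subtype)

namespace IsCoalgebraFiltration

variable {F : ℕ → Submodule R C}
  {A : Type*} [Ring A] [Algebra R A]

theorem mul_apply_eq_zero (hF : IsCoalgebraFiltration F) {u v : WithConv (C →ₗ[R] A)} {m : ℕ}
    (huv : ∀ i ≤ m, (∀ x ∈ F i, u x = 0) ∨ ∀ x ∈ F (m - i), v x = 0) {c : C} (hc : c ∈ F m) :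
    (u * v) c = 0 := by
  suffices h : ∑ i ∈ Finset.range (m + 1), LinearMap.range (map (F i).subtype (F (m - i)).subtype)
      ≤ LinearMap.ker (LinearMap.mul' R A ∘ₗ map u.ofConv v.ofConv) from h (hF.comul_mem m c hc)
  refine Finset.sum_induction _ (· ≤ _) (fun _ _ h₁ h₂ ↦ sup_le h₁ h₂) bot_le fun i hi ↦ ?_
  rintro _ ⟨y, rfl⟩
  rw [LinearMap.mem_ker, LinearMap.comp_apply, ← LinearMap.comp_apply (map _ _), ← map_comp]
  rcases huv i (Nat.lt_succ_iff.mp (Finset.mem_range.mp hi)) with hu | hv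
  · rw [show u.ofConv ∘ₗ (F i).subtype = 0 from LinearMap.ext fun x ↦ hu x x.2, map_zero_left]
    rfl
  · rw [show v.ofConv ∘ₗ (F (m - i)).subtype = 0 from LinearMap.ext fun x ↦ hv x x.2,
      map_zero_right]
    rfl

variable (A) in
noncomputable def vanishingIdeal (hF : IsCoalgebraFiltration F) (N : ℕ) :
    TwoSidedIdeal (WithConv (C →ₗ[R] A)) :=
  .mk' {u | ∀ c ∈ F N, u c = 0} (fun _ _ ↦ rfl)
    (fun hu hv c hc ↦ by simp [hu c hc, hv c hc]) (fun hu c hc ↦ by simp [hu c hc])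
    (fun hv _ hc ↦ hF.mul_apply_eq_zero
      (fun i _ ↦ .inr fun x hx ↦ hv x (hF.monotone (Nat.sub_le N i) hx)) hc)
    (fun hu _ hc ↦ hF.mul_apply_eq_zero (fun _ hi ↦ .inl fun x hx ↦ hu x (hF.monotone hi hx)) hc)

theorem mem_vanishingIdeal (hF : IsCoalgebraFiltration F) {N : ℕ} {u : WithConv (C →ₗ[R] A)} :
    u ∈ hF.vanishingIdeal A N ↔ ∀ c ∈ F N, u c = 0 :=
  TwoSidedIdeal.mem_mk' ..

theorem vanishingIdeal_antitone (hF : IsCoalgebraFiltration F) :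
    Antitone (hF.vanishingIdeal A) := fun _ _ hNM _ hu ↦
  hF.mem_vanishingIdeal.mpr fun c hc ↦ hF.mem_vanishingIdeal.mp hu c (hF.monotone hNM hc)

theorem mul_mem_vanishingIdeal_add_add_one (hF : IsCoalgebraFiltration F) {a b : ℕ}
    {u v : WithConv (C →ₗ[R] A)} (hu : u ∈ hF.vanishingIdeal A a)
    (hv : v ∈ hF.vanishingIdeal A b) : u * v ∈ hF.vanishingIdeal A (a + b + 1) := by
  rw [mem_vanishingIdeal] at hu hv ⊢
  refine fun c ↦ hF.mul_apply_eq_zero fun i _ ↦ ?_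
  rcases le_or_gt i a with hia | hai
  · exact .inl fun x hx ↦ hu x (hF.monotone hia hx)
  · exact .inr fun x hx ↦ hv x (hF.monotone (by omega) hx)

theorem pow_succ_mem_vanishingIdeal (hF : IsCoalgebraFiltration F) {x : WithConv (C →ₗ[R] A)}
    (hx : x ∈ hF.vanishingIdeal A 0) (N : ℕ) : x ^ (N + 1) ∈ hF.vanishingIdeal A N := by
  induction N with
  | zero => simpa using hx
  | succ N ih => rw [pow_succ]; exact hF.mul_mem_vanishingIdeal_add_add_one ih hx

theorem isUnit_one_sub_of_mem_vanishingIdeal_zero (hF : IsCoalgebraFiltration F)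
    (hexh : ⨆ n, F n = ⊤) {x : WithConv (C →ₗ[R] A)} (hx : x ∈ hF.vanishingIdeal A 0) :
    IsUnit (1 - x) := by
  refine isUnit_one_sub_of_forall_pow_succ_mem _ (fun y hy ↦ ?_) (fun s hs ↦ ?_)
    (hF.pow_succ_mem_vanishingIdeal hx)
  · refine WithConv.ext <| LinearMap.ext fun c ↦ ?_
    obtain ⟨N, hc⟩ := exists_mem_of_iSup_eq_top hF.monotone hexh c
    exact hF.mem_vanishingIdeal.mp (hy N) c hc
  · obtain ⟨t, ht⟩ := exists_linearMap_eqOn_of_iSup_eq_top hF.monotone hexh (fun N ↦ (s N).ofConv)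
      fun N N' hNN' c hc ↦ sub_eq_zero.mp (hF.mem_vanishingIdeal.mp (hs N N' hNN') c hc)
    exact ⟨toConv t, fun N ↦ hF.mem_vanishingIdeal.mpr fun c hc ↦ sub_eq_zero.mpr (ht N hc)⟩

theorem isUnit_add_of_mem_vanishingIdeal_zero (hF : IsCoalgebraFiltration F)
    (hexh : ⨆ n, F n = ⊤) {g f : WithConv (C →ₗ[R] A)} (hg : IsUnit g)
    (hf : f ∈ hF.vanishingIdeal A 0) : IsUnit (g + f) := by
  obtain ⟨G, rfl⟩ := hg
  have hfactor : ↑G + f = (1 - -(f * ↑G⁻¹)) * G := by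
    rw [sub_neg_eq_add, add_mul, one_mul, mul_assoc, G.inv_mul, mul_one]
  rw [hfactor]
  exact (hF.isUnit_one_sub_of_mem_vanishingIdeal_zero hexh
    (neg_mem (TwoSidedIdeal.mul_mem_right _ _ _ hf))).mul G.isUnit

theorem sub_mem_vanishingIdeal_succ_of_mul_add_eq_one (hF : IsCoalgebraFiltration F) {n : ℕ}
    {g gi f h : WithConv (C →ₗ[R] A)} (hg : g * gi = 1) (hh : h * (g + f) = 1)
    (hf : f ∈ hF.vanishingIdeal A n) : h - (gi - gi * (f * gi)) ∈ hF.vanishingIdeal A (n + 1) := by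
  have hfgi : h * f * gi = gi - h := by
    calc h * f * gi = h * (g + f) * gi - h * (g * gi) := by noncomm_ring
      _ = gi - h := by rw [hh, hg, one_mul, mul_one]
  have hexpand : h - (gi - gi * (f * gi)) = h * (f * gi * f) * gi := by
    calc h - (gi - gi * (f * gi)) = (gi - h) * (f * gi) := by
          rw [sub_mul, ← mul_assoc h f gi, hfgi]; abel
      _ = h * (f * gi * f) * gi := by rw [← hfgi]; noncomm_ring
  rw [hexpand]
  exact TwoSidedIdeal.mul_mem_right _ _ _ <| TwoSidedIdeal.mul_mem_left _ _ _ <|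
    hF.vanishingIdeal_antitone (by omega) <|
      hF.mul_mem_vanishingIdeal_add_add_one (TwoSidedIdeal.mul_mem_right _ _ _ hf) hf

end IsCoalgebraFiltration
end Filtration

theorem conv_eq_ofConv_mul {k : Type*} [Field k] {C A : Type*} [AddCommGroup C] [Module k C]
    [Coalgebra k C] [Ring A] [Algebra k A] (f g : C →ₗ[k] A) :
    conv f g = (toConv f * toConv g).ofConv :=
  rfl

theorem convUnit_eq_ofConv_one (k : Type*) [Field k] (C A : Type*) [AddCommGroup C]
    [Module k C] [Coalgebra k C] [Ring A] [Algebra k A] :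
    convUnit k C A = (1 : WithConv (C →ₗ[k] A)).ofConv :=
  rfl

theorem conv_inverse_of_invertible_plus_nilpotent_general {k : Type*} [Field k] {C A : Type*}
    [AddCommGroup C] [Module k C] [Coalgebra k C]
    [Ring A] [Algebra k A]
    (F : ℕ → Submodule k C)
    (hmono : Monotone F)
    (hexh : ⨆ n, F n = ⊤)
    (hfilt : ∀ m : ℕ, ∀ c ∈ F m, Coalgebra.comul (R := k) c ∈
      ∑ i ∈ Finset.range (m + 1),
        LinearMap.range (TensorProduct.map (F i).subtype (F (m - i)).subtype))
    (n : ℕ) (g gi f : C →ₗ[k] A)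
    (hg : conv g gi = convUnit k C A ∧ conv gi g = convUnit k C A)
    (hf : ∀ c ∈ F n, f c = 0) :
    ∃ h : C →ₗ[k] A,
      conv (g + f) h = convUnit k C A ∧
      conv h (g + f) = convUnit k C A ∧
      ∀ c ∈ F (n + 1), h c = (gi - conv gi (conv f gi)) c := by
  have hF : IsCoalgebraFiltration F := ⟨hmono, hfilt⟩
  let G : (WithConv (C →ₗ[k] A))ˣ := ⟨toConv g, toConv gi, congrArg toConv hg.1,
    congrArg toConv hg.2⟩
  have hfJ : toConv f ∈ hF.vanishingIdeal A n := hF.mem_vanishingIdeal.mpr hf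
  obtain ⟨V, hV⟩ := hF.isUnit_add_of_mem_vanishingIdeal_zero hexh G.isUnit
    (hF.vanishingIdeal_antitone n.zero_le hfJ)
  refine ⟨(↑V⁻¹ : WithConv (C →ₗ[k] A)).ofConv, ?_, ?_, fun c hc ↦ ?_⟩
  · rw [conv_eq_ofConv_mul, convUnit_eq_ofConv_one, toConv_add, toConv_ofConv, ← hV, V.mul_inv]
  · rw [conv_eq_ofConv_mul, convUnit_eq_ofConv_one, toConv_add, toConv_ofConv, ← hV, V.inv_mul]
  · have hinv : (↑V⁻¹ : WithConv (C →ₗ[k] A)) * (toConv g + toConv f) = 1 := hV ▸ V.inv_mul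
    exact sub_eq_zero.mp <| hF.mem_vanishingIdeal.mp
      (hF.sub_mem_vanishingIdeal_succ_of_mul_add_eq_one G.mul_inv hinv hfJ) c hc

/-- Let `{C_n}` be a coalgebra filtration on `C`, `A` a unital algebra,
`g : C → A` convolution-invertible (with inverse `gi`) and `f : C → A` vanishing on
`C_n`. Then `g + f` is convolution-invertible and `(g + f)⁻¹` agrees with
`g⁻¹ − g⁻¹ * f * g⁻¹` on `C_{n+1}`. -/
theorem conv_inverse_of_invertible_plus_nilpotent {k : Type*} [Field k] {C A : Type*}
    [AddCommGroup C] [Module k C] [Coalgebra k C]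
    [Ring A] [Algebra k A]
    (F : ℕ → Submodule k C)
    (hmono : Monotone F)
    (hexh : ⨆ n, F n = ⊤)
    (hfilt : ∀ m : ℕ, ∀ c ∈ F m, Coalgebra.comul (R := k) c ∈
      ∑ i ∈ Finset.range (m + 1),
        LinearMap.range (TensorProduct.map (F i).subtype (F (m - i)).subtype))
    (hsub : ∀ m : ℕ, ∀ c ∈ F m, Coalgebra.comul (R := k) c ∈
      LinearMap.range (TensorProduct.map (F m).subtype (F m).subtype))
    (n : ℕ) (g gi f : C →ₗ[k] A)
    (hg : conv g gi = convUnit k C A ∧ conv gi g = convUnit k C A)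
    (hf : ∀ c ∈ F n, f c = 0) :
    ∃ h : C →ₗ[k] A,
      conv (g + f) h = convUnit k C A ∧
      conv h (g + f) = convUnit k C A ∧
      ∀ c ∈ F (n + 1), h c = (gi - conv gi (conv f gi)) c :=
  conv_inverse_of_invertible_plus_nilpotent_general F hmono hexh hfilt n g gi f hg hf
end

section
/- Let C be a coalgebra with filtration {C_n}, λ : C → C_0 a linear retraction of the inclusion ι : C_0 → C, and φ = ι∘λ. For c ∈ C_{n+1} and p ≥ 1, the element Σ_{i=1}^{p} φ_i(Δ^{p-1}(c)) − Δ^{p-1}(c) lies in C_n^{⊗p}, where φ_i = φ^{⊗(i−1)} ⊗ id_C ⊗ φ^{⊗(p−i)}. -/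
open TensorProduct PiTensorProduct

variable {k : Type*} [Field k] {C : Type*} [AddCommGroup C] [Module k C] [Coalgebra k C]

/-- Cast between tensor powers of equal exponent. -/
noncomputable def tcast {a b : ℕ} (h : a = b) :
    (⨂[k] (_ : Fin a), C) ≃ₗ[k] ⨂[k] (_ : Fin b), C :=
  PiTensorProduct.reindex k (fun _ => C) (finCongr h)

/-- The equivalence `C^{⊗1} ≃ C`. -/
noncomputable def oneEquiv : (⨂[k] (_ : Fin 1), C) ≃ₗ[k] C :=
  PiTensorProduct.subsingletonEquiv 0

/-- Gluing of tensor powers: `C^{⊗a} ⊗ C^{⊗b} ≃ C^{⊗(a+b)}`. -/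
noncomputable def glue (a b : ℕ) :
    ((⨂[k] (_ : Fin a), C) ⊗[k] (⨂[k] (_ : Fin b), C)) ≃ₗ[k] ⨂[k] (_ : Fin (a + b)), C :=
  (PiTensorProduct.tmulEquiv k C).trans (PiTensorProduct.reindex k (fun _ => C) finSumFinEquiv)

/-- The iterated comultiplication `Δ^p : C → C^{⊗(p+1)}` (so `deltaIter 0` is the
canonical identification `C ≃ C^{⊗1}` and `deltaIter 1` is `Δ`). -/
noncomputable def deltaIter : ∀ p : ℕ, C →ₗ[k] ⨂[k] (_ : Fin (p + 1)), C
  | 0 => (oneEquiv (k := k) (C := C)).symm.toLinearMap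
  | p + 1 =>
    (tcast (by omega)).toLinearMap ∘ₗ (glue 1 (p + 1)).toLinearMap ∘ₗ
      (TensorProduct.map (oneEquiv (k := k) (C := C)).symm.toLinearMap (deltaIter p)) ∘ₗ
        Coalgebra.comul

/-- `φ_i = φ^{⊗(i-1)} ⊗ id_C ⊗ φ^{⊗(p-i)}` acting on `C^{⊗p}`. -/
noncomputable def phiMap (φ : C →ₗ[k] C) (p : ℕ) (i : Fin p) :
    (⨂[k] (_ : Fin p), C) →ₗ[k] ⨂[k] (_ : Fin p), C :=
  PiTensorProduct.map (fun j => if j = i then LinearMap.id else φ)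

/-- The subspace `C_n^{⊗p} ⊆ C^{⊗p}`. -/
noncomputable def powerSub (F : ℕ → Submodule k C) (n p : ℕ) :
    Submodule k (⨂[k] (_ : Fin p), C) :=
  LinearMap.range (PiTensorProduct.map (fun _ : Fin p => (F n).subtype))

/-!
Induct on `q`, using `Δ^{q+1} = (id ⊗ Δ^q) ∘ Δ` and `Δ c ∈ Σ_i C_i ⊗ C_{n+1-i}`. For a summand
`a ⊗ b` with `0 < i < n + 1` both factors lie in `C_n` and every term of
`(Σ_j φ_j - id)(a ⊗ Δ^q b)` is in `C_n^{⊗(q+2)}`, since `φ` lands in `C_0 ⊆ C_n`.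
For `i = 0`, `φ a = a`, so the expression is `a ⊗ φ^{⊗(q+1)}(Δ^q b) + a ⊗ (Σ_j φ_j - id)(Δ^q b)`
and the induction hypothesis applies to `b ∈ C_{n+1}`. For `i = n + 1`, `Δ^q b ∈ C_0^{⊗(q+1)}`
is fixed by every `φ_j` and by `φ^{⊗(q+1)}`, and the expression collapses to
`Σ_j φ a ⊗ Δ^q b ∈ C_0^{⊗(q+2)}`.
-/

section TensorPowers

variable {M : Type*} [AddCommGroup M] [Module k M] {F : ℕ → Submodule k M}

theorem tprod_mem_powerSub {n p : ℕ} {v : Fin p → M}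
    (hv : ∀ i, v i ∈ F n) : tprod k v ∈ powerSub F n p :=
  ⟨tprod k fun i => ⟨v i, hv i⟩, by simp⟩

theorem powerSub_le_comap {N : Type*} [AddCommGroup N] [Module k N] {n p : ℕ}
    {T : (⨂[k] (_ : Fin p), M) →ₗ[k] N} {Q : Submodule k N}
    (hT : ∀ v : Fin p → M, (∀ i, v i ∈ F n) → T (tprod k v) ∈ Q) :
    powerSub F n p ≤ Q.comap T := by
  rw [powerSub, map_range_eq_span_tprod, Submodule.span_le]
  rintro _ ⟨v, rfl⟩
  exact hT _ fun i => (v i).2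

theorem powerSub_mono (hF : Monotone F) (p : ℕ) :
    Monotone (powerSub F · p) := fun _ _ h =>
  powerSub_le_comap (T := LinearMap.id) fun _ hv => tprod_mem_powerSub fun i => hF h (hv i)

theorem map_mem_powerSub {m n p : ℕ} {f : Fin p → M →ₗ[k] M}
    (hf : ∀ j, ∀ x ∈ F m, f j x ∈ F n) {y : ⨂[k] (_ : Fin p), M} (hy : y ∈ powerSub F m p) :
    map f y ∈ powerSub F n p :=
  powerSub_le_comap (T := map f) (Q := powerSub F n p) (fun v hv => by
    rw [map_tprod]
    exact tprod_mem_powerSub fun j => hf j _ (hv j)) hy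

theorem map_mem_powerSub_of_forall_mem {n p : ℕ}
    {f : Fin p → M →ₗ[k] M} (hf : ∀ j x, f j x ∈ F n) (y : ⨂[k] (_ : Fin p), M) :
    map f y ∈ powerSub F n p := by
  have : LinearMap.range (map f) ≤ powerSub F n p := by
    rw [map_range_eq_span_tprod, Submodule.span_le]
    rintro _ ⟨v, rfl⟩
    exact tprod_mem_powerSub fun j => hf j (v j)
  exact this ⟨y, rfl⟩

theorem map_eq_self_of_mem_powerSub {n p : ℕ} {f : Fin p → M →ₗ[k] M}
    (hf : ∀ j, ∀ x ∈ F n, f j x = x) {y : ⨂[k] (_ : Fin p), M} (hy : y ∈ powerSub F n p) :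
    map f y = y := by
  have := powerSub_le_comap (T := map f - LinearMap.id) (Q := ⊥) (fun v hv => by
    simp [funext fun j => hf j _ (hv j)]) hy
  simpa [sub_eq_zero] using this

noncomputable def tmulCons (p : ℕ) :
    (M ⊗[k] (⨂[k] (_ : Fin p), M)) →ₗ[k] ⨂[k] (_ : Fin (p + 1)), M :=
  (tcast (add_comm 1 p)).toLinearMap ∘ₗ (glue 1 p).toLinearMap ∘ₗ
    TensorProduct.map (oneEquiv (k := k) (C := M)).symm.toLinearMap LinearMap.id

@[simp]
theorem tmulCons_tmul_tprod {p : ℕ} (x : M) (v : Fin p → M) :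
    tmulCons p (x ⊗ₜ[k] tprod k v) = (tprod k (Fin.cons x v) : ⨂[k] (_ : Fin (p + 1)), M) := by
  simp only [tmulCons, oneEquiv, tcast, glue, LinearMap.comp_apply, LinearEquiv.coe_coe,
    map_tmul, LinearMap.id_apply, subsingletonEquiv_symm_apply', LinearEquiv.trans_apply,
    tmulEquiv_apply, reindex_tprod]
  congr 1
  funext j
  induction j using Fin.cases with
  | zero => rfl
  | succ i =>
    have : finSumFinEquiv.symm ((finCongr (add_comm 1 p)).symm i.succ) = Sum.inr i := by
      rw [Equiv.symm_apply_eq]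
      ext
      simp [add_comm]
    rw [this]
    rfl

theorem map_comp_tmulCons {p : ℕ} (f : Fin (p + 1) → M →ₗ[k] M) :
    map f ∘ₗ tmulCons p = tmulCons p ∘ₗ TensorProduct.map (f 0) (map fun j => f j.succ) := by
  ext x v
  simp only [LinearMap.comp_apply, AlgebraTensorModule.curry_apply, curry_apply,
    LinearMap.coe_restrictScalars, LinearMap.compMultilinearMap_apply, map_tmul,
    tmulCons_tmul_tprod, map_tprod]
  congr 1
  funext j
  induction j using Fin.cases <;> rfl

theorem tmulCons_tmul_mem {m p : ℕ} {x : M} (hx : x ∈ F m)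
    {y : ⨂[k] (_ : Fin p), M} (hy : y ∈ powerSub F m p) :
    tmulCons p (x ⊗ₜ[k] y) ∈ powerSub F m (p + 1) :=
  powerSub_le_comap (T := tmulCons p ∘ₗ TensorProduct.mk k _ _ x) (Q := powerSub F m (p + 1))
    (fun v hv => by
      simp only [LinearMap.comp_apply, mk_apply, tmulCons_tmul_tprod]
      exact tprod_mem_powerSub fun i => Fin.cases hx hv i) hy

variable {φ : M →ₗ[k] M}

theorem phiMap_mem_powerSub (hF : Monotone F) (hφ : ∀ x, φ x ∈ F 0) {n p : ℕ} (i : Fin p)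
    {y : ⨂[k] (_ : Fin p), M} (hy : y ∈ powerSub F n p) : phiMap φ p i y ∈ powerSub F n p :=
  map_mem_powerSub (fun j x hx => by
    split_ifs
    exacts [hx, hF n.zero_le (hφ x)]) hy

theorem phiMap_eq_self_of_mem_powerSub (hφ : ∀ x ∈ F 0, φ x = x) {p : ℕ} (i : Fin p)
    {y : ⨂[k] (_ : Fin p), M} (hy : y ∈ powerSub F 0 p) : phiMap φ p i y = y :=
  map_eq_self_of_mem_powerSub (fun j x hx => by
    split_ifs
    exacts [rfl, hφ x hx]) hy

theorem phiMap_zero_comp_tmulCons (φ : M →ₗ[k] M) (p : ℕ) :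
    phiMap φ (p + 1) 0 ∘ₗ tmulCons p =
      tmulCons p ∘ₗ TensorProduct.map LinearMap.id (map fun _ => φ) := by
  rw [phiMap, map_comp_tmulCons]
  simp [Fin.succ_ne_zero]

theorem phiMap_succ_comp_tmulCons (φ : M →ₗ[k] M) {p : ℕ} (i : Fin p) :
    phiMap φ (p + 1) i.succ ∘ₗ tmulCons p = tmulCons p ∘ₗ TensorProduct.map φ (phiMap φ p i) := by
  rw [phiMap, map_comp_tmulCons]
  simp [(Fin.succ_ne_zero i).symm, phiMap]

noncomputable def phiDefect (φ : M →ₗ[k] M) (p : ℕ) :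
    (⨂[k] (_ : Fin p), M) →ₗ[k] ⨂[k] (_ : Fin p), M :=
  ∑ i, phiMap φ p i - LinearMap.id

theorem phiDefect_apply (φ : M →ₗ[k] M) {p : ℕ} (y : ⨂[k] (_ : Fin p), M) :
    phiDefect φ p y = ∑ i, phiMap φ p i y - y := by
  simp [phiDefect, LinearMap.sum_apply]

theorem phiDefect_one (φ : M →ₗ[k] M) : phiDefect φ 1 = 0 := by
  simp [phiDefect, phiMap, Subsingleton.elim _ (0 : Fin 1)]

theorem phiDefect_tmulCons (φ : M →ₗ[k] M) {p : ℕ} (a : M) (y : ⨂[k] (_ : Fin p), M) :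
    phiDefect φ (p + 1) (tmulCons p (a ⊗ₜ y)) =
      tmulCons p (a ⊗ₜ map (fun _ => φ) y) + ∑ j, tmulCons p (φ a ⊗ₜ phiMap φ p j y) -
        tmulCons p (a ⊗ₜ y) := by
  rw [phiDefect_apply, Fin.sum_univ_succ, ← LinearMap.comp_apply, phiMap_zero_comp_tmulCons]
  simp only [← LinearMap.comp_apply, phiMap_succ_comp_tmulCons]
  simp

variable {n p : ℕ} {a : M} {y : ⨂[k] (_ : Fin p), M}

theorem tmulCons_tmul_map_mem (hF : Monotone F) (hφ : ∀ x, φ x ∈ F 0) (ha : a ∈ F n) :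
    tmulCons p (a ⊗ₜ map (fun _ => φ) y) ∈ powerSub F n (p + 1) :=
  tmulCons_tmul_mem ha <| powerSub_mono hF p n.zero_le <|
    map_mem_powerSub_of_forall_mem (fun _ => hφ) y

theorem phiDefect_tmulCons_mem_of_mem_zero_left (hF : Monotone F) (hφ : ∀ x, φ x ∈ F 0)
    (hφ_id : ∀ x ∈ F 0, φ x = x) (ha : a ∈ F 0) (hy : phiDefect φ p y ∈ powerSub F n p) :
    phiDefect φ (p + 1) (tmulCons p (a ⊗ₜ y)) ∈ powerSub F n (p + 1) := by
  have ha' := hF n.zero_le ha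
  have : phiDefect φ (p + 1) (tmulCons p (a ⊗ₜ y)) =
      tmulCons p (a ⊗ₜ map (fun _ => φ) y) + tmulCons p (a ⊗ₜ phiDefect φ p y) := by
    rw [phiDefect_tmulCons, hφ_id a ha, phiDefect_apply, tmul_sub, tmul_sum, map_sub, map_sum]
    abel
  rw [this]
  exact add_mem (tmulCons_tmul_map_mem hF hφ ha') (tmulCons_tmul_mem ha' hy)

theorem phiDefect_tmulCons_mem_of_mem_powerSub_zero (hF : Monotone F) (hφ : ∀ x, φ x ∈ F 0)
    (hφ_id : ∀ x ∈ F 0, φ x = x) (a : M) (hy : y ∈ powerSub F 0 p) :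
    phiDefect φ (p + 1) (tmulCons p (a ⊗ₜ y)) ∈ powerSub F n (p + 1) := by
  rw [phiDefect_tmulCons, map_eq_self_of_mem_powerSub (fun _ => hφ_id) hy, add_sub_cancel_left]
  refine sum_mem fun j _ => ?_
  rw [phiMap_eq_self_of_mem_powerSub hφ_id j hy]
  exact powerSub_mono hF (p + 1) n.zero_le (tmulCons_tmul_mem (hφ a) hy)

theorem phiDefect_tmulCons_mem (hF : Monotone F) (hφ : ∀ x, φ x ∈ F 0) (ha : a ∈ F n)
    (hy : y ∈ powerSub F n p) :
    phiDefect φ (p + 1) (tmulCons p (a ⊗ₜ y)) ∈ powerSub F n (p + 1) := by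
  rw [phiDefect_tmulCons]
  refine sub_mem (add_mem (tmulCons_tmul_map_mem hF hφ ha) (sum_mem fun j _ => ?_))
    (tmulCons_tmul_mem ha hy)
  exact tmulCons_tmul_mem (hF n.zero_le (hφ a)) (phiMap_mem_powerSub hF hφ j hy)

end TensorPowers

def IsComulFiltered (F : ℕ → Submodule k C) : Prop :=
  ∀ m : ℕ, ∀ c ∈ F m, Coalgebra.comul (R := k) c ∈
    ∑ i ∈ Finset.range (m + 1),
      LinearMap.range (TensorProduct.map (F i).subtype (F (m - i)).subtype)

theorem IsComulFiltered.comul_mem {F : ℕ → Submodule k C} (hF : IsComulFiltered F)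
    {N : Type*} [AddCommGroup N] [Module k N] (g : C ⊗[k] C →ₗ[k] N) {Q : Submodule k N}
    {m : ℕ} (hg : ∀ i ≤ m, ∀ a ∈ F i, ∀ b ∈ F (m - i), g (a ⊗ₜ b) ∈ Q) {c : C} (hc : c ∈ F m) :
    g (Coalgebra.comul c) ∈ Q := by
  have : ∑ i ∈ Finset.range (m + 1),
      LinearMap.range (TensorProduct.map (F i).subtype (F (m - i)).subtype) ≤ Q.comap g := by
    -- a finite sum of submodules is definitionally their `Finset.sup`
    refine Finset.sup_le fun i hi => ?_
    rw [range_map_eq_span_tmul, Submodule.span_le]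
    rintro _ ⟨a, b, rfl⟩
    exact hg i (Nat.lt_succ_iff.mp (Finset.mem_range.mp hi)) a a.2 b b.2
  exact this (hF m c hc)

theorem deltaIter_succ_apply (q : ℕ) (c : C) :
    deltaIter (k := k) (q + 1) c =
      tmulCons (q + 1) (TensorProduct.map LinearMap.id (deltaIter q) (Coalgebra.comul c)) := by
  simp [deltaIter, tmulCons, map_map]

theorem deltaIter_mem {F : ℕ → Submodule k C} (hF : Monotone F) (hΔ : IsComulFiltered F)
    (q : ℕ) {m : ℕ} {c : C} (hc : c ∈ F m) : deltaIter q c ∈ powerSub F m (q + 1) := by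
  induction q generalizing m c with
  | zero => simpa [deltaIter, oneEquiv] using tprod_mem_powerSub fun _ => hc
  | succ q ih =>
    rw [deltaIter_succ_apply]
    refine hΔ.comul_mem (tmulCons (q + 1) ∘ₗ TensorProduct.map LinearMap.id (deltaIter q))
      (fun i hi a ha b hb => ?_) hc
    simp only [LinearMap.comp_apply, map_tmul, LinearMap.id_apply]
    exact tmulCons_tmul_mem (hF hi ha) (ih (hF (m.sub_le i) hb))

theorem phi_sum_sub_deltaIter_mem_general {k : Type*} [Field k] {C : Type*}
    [AddCommGroup C] [Module k C] [Coalgebra k C]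
    (F : ℕ → Submodule k C)
    (hmono : Monotone F)
    (hfilt : ∀ m : ℕ, ∀ c ∈ F m, Coalgebra.comul (R := k) c ∈
      ∑ i ∈ Finset.range (m + 1),
        LinearMap.range (TensorProduct.map (F i).subtype (F (m - i)).subtype))
    (φ : C →ₗ[k] C)
    (hφ_mem : ∀ x : C, φ x ∈ F 0)
    (hφ_id : ∀ x ∈ F 0, φ x = x)
    (n q : ℕ) :
    ∀ c ∈ F (n + 1),
      (∑ i : Fin (q + 1), phiMap φ (q + 1) i (deltaIter q c)) - deltaIter q c ∈
        powerSub F n (q + 1) := by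
  have hΔ : IsComulFiltered F := hfilt
  simp_rw [← phiDefect_apply]
  induction q with
  | zero => simp [phiDefect_one]
  | succ q ih =>
    intro c hc
    rw [deltaIter_succ_apply]
    refine hΔ.comul_mem (phiDefect φ (q + 2) ∘ₗ tmulCons (q + 1) ∘ₗ
      TensorProduct.map LinearMap.id (deltaIter q)) (fun i hi a ha b hb => ?_) hc
    simp only [LinearMap.comp_apply, map_tmul, LinearMap.id_apply]
    obtain rfl | hi0 := eq_or_ne i 0
    · exact phiDefect_tmulCons_mem_of_mem_zero_left hmono hφ_mem hφ_id ha
        (ih b (by simpa using hb))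
    obtain rfl | hin := eq_or_ne i (n + 1)
    · exact phiDefect_tmulCons_mem_of_mem_powerSub_zero hmono hφ_mem hφ_id a
        (deltaIter_mem hmono hΔ q (by simpa using hb))
    · exact phiDefect_tmulCons_mem hmono hφ_mem (hmono (by omega) ha)
        (deltaIter_mem hmono hΔ q (hmono (by omega) hb))

/-- Let `{C_n}` be a coalgebra filtration of `C`, `λ` a linear retraction of
the inclusion `C_0 ⊆ C` and `φ = ι ∘ λ`. For `c ∈ C_{n+1}` and `p = q + 1 ≥ 1`, the
element `Σ_{i=1}^{p} φ_i(Δ^{p-1}(c)) − Δ^{p-1}(c)` lies in `C_n^{⊗p}`. -/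
theorem phi_sum_sub_deltaIter_mem {k : Type*} [Field k] {C : Type*}
    [AddCommGroup C] [Module k C] [Coalgebra k C]
    (F : ℕ → Submodule k C)
    (hmono : Monotone F)
    (hexh : ⨆ n, F n = ⊤)
    (hfilt : ∀ m : ℕ, ∀ c ∈ F m, Coalgebra.comul (R := k) c ∈
      ∑ i ∈ Finset.range (m + 1),
        LinearMap.range (TensorProduct.map (F i).subtype (F (m - i)).subtype))
    (φ : C →ₗ[k] C)
    (hφ_mem : ∀ x : C, φ x ∈ F 0)
    (hφ_id : ∀ x ∈ F 0, φ x = x)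
    (n q : ℕ) :
    ∀ c ∈ F (n + 1),
      (∑ i : Fin (q + 1), phiMap φ (q + 1) i (deltaIter q c)) - deltaIter q c ∈
        powerSub F n (q + 1) :=
  phi_sum_sub_deltaIter_mem_general F hmono hfilt φ hφ_mem hφ_id n q
end
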